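/- Let D ∈ ℕ, K, τ₁ > 0, 0 < τ_lo ≤ τ_hi, and let p₀ be a probability density on ℝ^D supported on [−1,1]^D with τ₁ ≤ p₀(x) ≤ K for all x ∈ [−1,1]^D; let α, μ_t, σ_t, p_t be as in the forward process. Then there exists a constant C > 0 depending only on (D, K, τ₁) such that for every x ∈ ℝ^D and every t > 0, C^{−1} exp( −D ((‖x‖_∞ − μ_t) ∨ 0)² / σ_t² ) ≤ p_t(x) ≤ C exp( −((‖x‖_∞ − μ_t) ∨ 0)² / (2σ_t²) ). -/

import Mathlib

/-!
Since `φ_σ` factorizes over coordinates and `τ₁ ≤ p₀ ≤ K` on the cube, `p_t(x)` lies between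
`τ₁ ∏ᵢ J(xᵢ)` and `K ∏ᵢ J(xᵢ)`, where `J(a) = ∫_{-1}^{1} φ_σ(a - μu) du = μ⁻¹ ∫_{a-μ}^{a+μ} φ_σ`
is even in `a`. Take `a ≥ 0` and `r = (a - μ) ∨ 0`. As `μ² + σ² = 1`, either `μ ≥ 1/2` and the
Gaussian tail beyond `r` gives `J(a) ≤ μ⁻¹ e^{-r²/2σ²} ≤ 2 e^{-r²/2σ²}`, or `σ² ≥ 1/2` and the
density is at most `e^{-r²/2σ²}` on the window `[a - μ, a + μ]`. Conversely the window contains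
`[r, r + σμ]`, so `J(a) ≥ σ φ_σ(r + σ) ≥ (√(2π) e)⁻¹ e^{-r²/σ²}`. Finally `rᵢ ≤ (‖x‖∞ - μ) ∨ 0`
for every coordinate, with equality for the largest one.
-/

open MeasureTheory
open scoped BigOperators ENNReal NNReal

noncomputable section

namespace DMpaper

attribute [local instance] Classical.propDecidable

/-- The cube `[-1,1]^D`. -/
def cube (D : ℕ) : Set (Fin D → ℝ) := Set.Icc (-1) 1

/-- Density of the Gaussian `N(0, σ² I_D)` on `ℝ^D`. -/
def gaussD (D : ℕ) (σ : ℝ) (x : Fin D → ℝ) : ℝ :=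
  (2 * Real.pi * σ ^ 2) ^ (-(D : ℝ) / 2) * Real.exp (-(∑ i, x i ^ 2) / (2 * σ ^ 2))

/-- `μ_t = exp (-∫_0^t α_s ds)` for the forward process. -/
def muT (α : ℝ → ℝ) (t : ℝ) : ℝ := Real.exp (-∫ s in Set.Ioc (0 : ℝ) t, α s)

/-- `σ_t = √(1 - μ_t²)` for the forward process. -/
def sigmaT (α : ℝ → ℝ) (t : ℝ) : ℝ := Real.sqrt (1 - muT α t ^ 2)

/-- The marginal density `p_t(x) = ∫_{[-1,1]^D} p₀(y) φ_{σ_t}(x - μ_t y) dy`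
of the forward process. -/
def fwdDen (D : ℕ) (α : ℝ → ℝ) (p₀ : (Fin D → ℝ) → ℝ) (t : ℝ) (x : Fin D → ℝ) : ℝ :=
  ∫ y in cube D, p₀ y * gaussD D (sigmaT α t) (x - muT α t • y)

/-- `p₀` is a probability density supported on `[-1,1]^D`, and `α` is Borel measurable
with values in `[τlo, τhi]` on `[0,∞)`. -/
def ForwardHyp (D : ℕ) (τlo τhi : ℝ) (α : ℝ → ℝ) (p₀ : (Fin D → ℝ) → ℝ) : Prop :=
  Measurable p₀ ∧ (∀ x, 0 ≤ p₀ x) ∧ (∀ x, x ∉ cube D → p₀ x = 0) ∧ (∫ x, p₀ x) = 1 ∧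
    Measurable α ∧ ∀ t, 0 ≤ t → τlo ≤ α t ∧ α t ≤ τhi

open Real Set ProbabilityTheory

lemma setIntegral_mul_mem_Icc {α : Type*} [MeasurableSpace α] {ν : Measure α} {s : Set α}
    (hs : MeasurableSet s) {f g : α → ℝ} {a b : ℝ} (hf : AEStronglyMeasurable f (ν.restrict s))
    (hg : IntegrableOn g s ν) (hg0 : ∀ x ∈ s, 0 ≤ g x) (hfab : ∀ x ∈ s, a ≤ f x ∧ f x ≤ b) :
    a * ∫ x in s, g x ∂ν ≤ ∫ x in s, f x * g x ∂ν ∧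
      ∫ x in s, f x * g x ∂ν ≤ b * ∫ x in s, g x ∂ν := by
  have hfg : IntegrableOn (fun x => f x * g x) s ν :=
    hg.bdd_mul hf (ae_restrict_of_forall_mem hs fun x hx =>
      abs_le_max_abs_abs (hfab x hx).1 (hfab x hx).2)
  rw [← integral_const_mul, ← integral_const_mul]
  exact ⟨setIntegral_mono_on (hg.const_mul a) hfg hs fun x hx =>
      mul_le_mul_of_nonneg_right (hfab x hx).1 (hg0 x hx),
    setIntegral_mono_on hfg (hg.const_mul b) hs fun x hx =>
      mul_le_mul_of_nonneg_right (hfab x hx).2 (hg0 x hx)⟩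

lemma sq_max_norm_sub_le_sum {ι : Type*} [Fintype ι] {c : ℝ} (hc : 0 ≤ c) (x : ι → ℝ) :
    max (‖x‖ - c) 0 ^ 2 ≤ ∑ i, max (|x i| - c) 0 ^ 2 := by
  rcases le_or_gt (‖x‖ - c) 0 with h | h
  · rw [max_eq_right h, sq, zero_mul]
    positivity
  obtain ⟨i, -⟩ : ∃ i, x i ≠ 0 := Function.ne_iff.1 (norm_pos_iff.1 (by linarith) : x ≠ 0)
  have : Nonempty ι := ⟨i⟩
  obtain ⟨j, hj⟩ := (IsGreatest.pi_norm x).1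
  have hj' : |x j| = ‖x‖ := by simpa using hj
  calc max (‖x‖ - c) 0 ^ 2 = max (|x j| - c) 0 ^ 2 := by rw [hj']
    _ ≤ ∑ i, max (|x i| - c) 0 ^ 2 :=
      Finset.single_le_sum (f := fun i => max (|x i| - c) 0 ^ 2) (fun i _ => sq_nonneg _)
        (Finset.mem_univ j)

section Gaussian

variable {v : ℝ≥0}

lemma gaussianPDFReal_zero_le_of_abs_le {x y : ℝ} (h : |x| ≤ |y|) :
    gaussianPDFReal 0 v y ≤ gaussianPDFReal 0 v x := by
  simp only [gaussianPDFReal, sub_zero]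
  gcongr ?_ * exp ?_
  exact div_le_div_of_nonneg_right (neg_le_neg (sq_le_sq.2 h)) (by positivity)

/-- Completing the square: `z² ≥ m² + (z - m)²` exactly when `m (z - m) ≥ 0`. -/
lemma gaussianPDFReal_zero_le_exp_mul {m z : ℝ} (h : 0 ≤ m * (z - m)) :
    gaussianPDFReal 0 v z ≤ exp (-m ^ 2 / (2 * v)) * gaussianPDFReal 0 v (z - m) := by
  simp only [gaussianPDFReal, sub_zero]
  rw [mul_left_comm, ← exp_add, ← add_div]
  gcongr
  nlinarith

lemma setIntegral_Ioc_gaussianPDFReal_le (hv : v ≠ 0) (c d : ℝ) :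
    ∫ z in Ioc c d, gaussianPDFReal 0 v z ≤ exp (-max c 0 ^ 2 / (2 * v)) := by
  set m := max c 0
  have hpoint : ∀ z ∈ Ioc c d,
      gaussianPDFReal 0 v z ≤ exp (-m ^ 2 / (2 * v)) * gaussianPDFReal m v z := by
    intro z hz
    rw [← zero_add m, ← gaussianPDFReal_sub, zero_add]
    refine gaussianPDFReal_zero_le_exp_mul ?_
    rcases le_total c 0 with hc | hc
    · simp [m, max_eq_right hc]
    · rw [show m = c from max_eq_left hc]
      exact mul_nonneg hc (by linarith [hz.1])
  calc ∫ z in Ioc c d, gaussianPDFReal 0 v z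
      ≤ ∫ z in Ioc c d, exp (-m ^ 2 / (2 * v)) * gaussianPDFReal m v z :=
        setIntegral_mono_on (integrable_gaussianPDFReal 0 v).integrableOn
          ((integrable_gaussianPDFReal m v).const_mul _).integrableOn measurableSet_Ioc hpoint
    _ ≤ ∫ z, exp (-m ^ 2 / (2 * v)) * gaussianPDFReal m v z :=
        setIntegral_le_integral ((integrable_gaussianPDFReal m v).const_mul _)
          (Filter.Eventually.of_forall fun z => by positivity [gaussianPDFReal_nonneg m v z])
    _ = exp (-m ^ 2 / (2 * v)) := by
        rw [integral_const_mul, integral_gaussianPDFReal_eq_one m hv, mul_one]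

lemma exp_div_le_sqrt_mul_gaussianPDFReal (hv : v ≠ 0) (r : ℝ) :
    (√(2 * π) * exp 1)⁻¹ * exp (-r ^ 2 / v) ≤ √(v : ℝ) * gaussianPDFReal 0 v (r + √(v : ℝ)) := by
  set σ := √(v : ℝ)
  have hσ : 0 < σ := sqrt_pos.2 (by positivity)
  have hσv : σ ^ 2 = v := sq_sqrt v.2
  have hsqrt : σ * (√(2 * π * v))⁻¹ = (√(2 * π))⁻¹ := by
    rw [sqrt_mul (by positivity)]
    change σ * (√(2 * π) * σ)⁻¹ = _
    field_simp
  have hexp : -1 + -r ^ 2 / v ≤ -(r + σ) ^ 2 / (2 * v) := by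
    have hgap :
        -(r + σ) ^ 2 / (2 * σ ^ 2) - (-1 + -r ^ 2 / σ ^ 2) = (r - σ) ^ 2 / (2 * σ ^ 2) := by
      field_simp
      ring
    rw [← hσv]
    linarith [div_nonneg (sq_nonneg (r - σ)) (by positivity : (0 : ℝ) ≤ 2 * σ ^ 2)]
  rw [gaussianPDFReal, ← mul_assoc, hsqrt, mul_inv, mul_assoc, ← exp_neg, ← exp_add, sub_zero]
  gcongr

end Gaussian

section GaussianIccIntegral

variable {v : ℝ≥0} {μ : ℝ} {ι : Type*} [Fintype ι]

/-- The one-dimensional factor of `∫_{[-1,1]^D} φ_σ(x - μ y) dy`, with `v = σ²`. -/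
def gaussianIccIntegral (v : ℝ≥0) (μ a : ℝ) : ℝ :=
  ∫ u in Icc (-1) 1, gaussianPDFReal 0 v (a - μ * u)

lemma gaussianIccIntegral_nonneg (a : ℝ) : 0 ≤ gaussianIccIntegral v μ a :=
  setIntegral_nonneg measurableSet_Icc fun _ _ => gaussianPDFReal_nonneg _ _ _

lemma gaussianIccIntegral_eq (hμ : 0 < μ) (a : ℝ) :
    gaussianIccIntegral v μ a = μ⁻¹ * ∫ z in (a - μ)..(a + μ), gaussianPDFReal 0 v z := by
  rw [gaussianIccIntegral, integral_Icc_eq_integral_Ioc, ← intervalIntegral.integral_of_le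
    (by norm_num), intervalIntegral.integral_comp_sub_mul _ hμ.ne', smul_eq_mul]
  ring_nf

lemma gaussianIccIntegral_abs (hμ : 0 < μ) (a : ℝ) :
    gaussianIccIntegral v μ |a| = gaussianIccIntegral v μ a := by
  rcases le_total 0 a with ha | ha
  · rw [abs_of_nonneg ha]
  · have heven : ∀ z, gaussianPDFReal 0 v (-z) = gaussianPDFReal 0 v z := fun z => by
      simp [gaussianPDFReal]
    have hneg :=
      intervalIntegral.integral_comp_neg (a := a - μ) (b := a + μ) (gaussianPDFReal 0 v)
    simp only [heven] at hneg
    rw [abs_of_nonpos ha, gaussianIccIntegral_eq hμ, gaussianIccIntegral_eq hμ, hneg]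
    ring_nf

lemma gaussianIccIntegral_le (hμ : 0 < μ) (hv : v ≠ 0) (hμv : μ ^ 2 + v = 1) (a : ℝ) :
    gaussianIccIntegral v μ a ≤ 2 * exp (-max (|a| - μ) 0 ^ 2 / (2 * v)) := by
  set r := max (|a| - μ) 0
  set E := exp (-r ^ 2 / (2 * v))
  rw [← gaussianIccIntegral_abs hμ, gaussianIccIntegral_eq hμ]
  suffices h : ∫ z in (|a| - μ)..(|a| + μ), gaussianPDFReal 0 v z ≤ 2 * μ * E by
    calc μ⁻¹ * ∫ z in (|a| - μ)..(|a| + μ), gaussianPDFReal 0 v z ≤ μ⁻¹ * (2 * μ * E) := by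
          gcongr
      _ = 2 * E := by field_simp
  rcases le_or_gt 1 (2 * μ) with hμ2 | hμ2
  · rw [intervalIntegral.integral_of_le (by linarith)]
    calc _ ≤ E := setIntegral_Ioc_gaussianPDFReal_le hv _ _
      _ ≤ 2 * μ * E := le_mul_of_one_le_left (exp_pos _).le hμ2
  · -- when `μ < 1/2` the variance exceeds `1/2`, so the density is below `1` everywhere
    have hpeak : gaussianPDFReal 0 v r ≤ E := by
      have h2πv : 1 ≤ √(2 * π * v) := by
        rw [one_le_sqrt]
        nlinarith [pi_gt_three]
      simp only [gaussianPDFReal, sub_zero, E]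
      exact mul_le_of_le_one_left (exp_pos _).le (inv_le_one_of_one_le₀ h2πv)
    have hmono : ∀ z ∈ Icc (|a| - μ) (|a| + μ), gaussianPDFReal 0 v z ≤ gaussianPDFReal 0 v r :=
      fun z hz => gaussianPDFReal_zero_le_of_abs_le <| by
        rw [abs_of_nonneg (le_max_right _ _)]
        exact max_le (hz.1.trans (le_abs_self z)) (abs_nonneg z)
    calc _ ≤ ∫ _ in (|a| - μ)..(|a| + μ), gaussianPDFReal 0 v r :=
          intervalIntegral.integral_mono_on (by linarith)
            (integrable_gaussianPDFReal 0 v).intervalIntegrable intervalIntegrable_const hmono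
      _ = 2 * μ * gaussianPDFReal 0 v r := by
          rw [intervalIntegral.integral_const, smul_eq_mul]
          ring
      _ ≤ 2 * μ * E := by gcongr

lemma le_gaussianIccIntegral (hμ : 0 < μ) (hv : v ≠ 0) (hμv : μ ^ 2 + v = 1) (a : ℝ) :
    (√(2 * π) * exp 1)⁻¹ * exp (-max (|a| - μ) 0 ^ 2 / v) ≤ gaussianIccIntegral v μ a := by
  set r := max (|a| - μ) 0
  set σ := √(v : ℝ)
  have hσ : 0 < σ := sqrt_pos.2 (by positivity)
  have hσ1 : σ ≤ 1 := by rw [sqrt_le_one]; nlinarith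
  have hr : 0 ≤ r := le_max_right _ _
  rw [← gaussianIccIntegral_abs hμ, gaussianIccIntegral_eq hμ]
  -- `[r, r + σμ]` lies in the window `[|a| - μ, |a| + μ]`, and there the density is at least
  -- its value at `r + σ`
  have hmono : ∀ z ∈ Icc r (r + σ * μ),
      gaussianPDFReal 0 v (r + σ) ≤ gaussianPDFReal 0 v z := fun z hz =>
    gaussianPDFReal_zero_le_of_abs_le <| by
      rw [abs_of_nonneg (hr.trans hz.1), abs_of_nonneg (by positivity)]
      nlinarith [hz.2]
  have hwindow : σ * μ * gaussianPDFReal 0 v (r + σ)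
      ≤ ∫ z in (|a| - μ)..(|a| + μ), gaussianPDFReal 0 v z :=
    calc σ * μ * gaussianPDFReal 0 v (r + σ)
        = ∫ _ in r..(r + σ * μ), gaussianPDFReal 0 v (r + σ) := by
          rw [intervalIntegral.integral_const, smul_eq_mul]
          ring
      _ ≤ ∫ z in r..(r + σ * μ), gaussianPDFReal 0 v z :=
          intervalIntegral.integral_mono_on (le_add_of_nonneg_right (by positivity))
            intervalIntegrable_const (integrable_gaussianPDFReal 0 v).intervalIntegrable hmono
      _ ≤ ∫ z in (|a| - μ)..(|a| + μ), gaussianPDFReal 0 v z :=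
          intervalIntegral.integral_mono_interval (le_max_left _ _)
            (le_add_of_nonneg_right (by positivity))
            (by linarith [max_le (by linarith : |a| - μ ≤ |a|) (abs_nonneg a),
              mul_le_of_le_one_left hμ.le hσ1])
            (Filter.Eventually.of_forall fun z => gaussianPDFReal_nonneg 0 v z)
            (integrable_gaussianPDFReal 0 v).intervalIntegrable
  calc _ ≤ σ * gaussianPDFReal 0 v (r + σ) := exp_div_le_sqrt_mul_gaussianPDFReal hv r
    _ = μ⁻¹ * (σ * μ * gaussianPDFReal 0 v (r + σ)) := by field_simp
    _ ≤ _ := by gcongr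

lemma prod_gaussianIccIntegral_le (hμ : 0 < μ) (hv : v ≠ 0) (hμv : μ ^ 2 + v = 1)
    (x : ι → ℝ) :
    ∏ i, gaussianIccIntegral v μ (x i) ≤
      2 ^ Fintype.card ι * exp (-max (‖x‖ - μ) 0 ^ 2 / (2 * v)) :=
  calc ∏ i, gaussianIccIntegral v μ (x i)
      ≤ ∏ i, 2 * exp (-max (|x i| - μ) 0 ^ 2 / (2 * v)) :=
        Finset.prod_le_prod (fun i _ => gaussianIccIntegral_nonneg _)
          fun i _ => gaussianIccIntegral_le hμ hv hμv _
    _ = 2 ^ Fintype.card ι * exp (-(∑ i, max (|x i| - μ) 0 ^ 2) / (2 * v)) := by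
        rw [Finset.prod_mul_distrib, Finset.prod_const, Finset.card_univ, ← exp_sum,
          ← Finset.sum_div, Finset.sum_neg_distrib]
    _ ≤ 2 ^ Fintype.card ι * exp (-max (‖x‖ - μ) 0 ^ 2 / (2 * v)) := by
        gcongr
        exact sq_max_norm_sub_le_sum hμ.le x

lemma le_prod_gaussianIccIntegral (hμ : 0 < μ) (hv : v ≠ 0) (hμv : μ ^ 2 + v = 1)
    (x : ι → ℝ) :
    (√(2 * π) * exp 1)⁻¹ ^ Fintype.card ι *
        exp (-(Fintype.card ι * max (‖x‖ - μ) 0 ^ 2) / v) ≤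
      ∏ i, gaussianIccIntegral v μ (x i) :=
  calc (√(2 * π) * exp 1)⁻¹ ^ Fintype.card ι * exp (-(Fintype.card ι * max (‖x‖ - μ) 0 ^ 2) / v)
      = ∏ _i : ι, (√(2 * π) * exp 1)⁻¹ * exp (-max (‖x‖ - μ) 0 ^ 2 / v) := by
        rw [Finset.prod_const, Finset.card_univ, mul_pow, ← exp_nat_mul]
        ring_nf
    _ ≤ ∏ i, (√(2 * π) * exp 1)⁻¹ * exp (-max (|x i| - μ) 0 ^ 2 / v) := by
        refine Finset.prod_le_prod (fun _ _ => by positivity) fun i _ => ?_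
        have hxi : |x i| ≤ ‖x‖ := by simpa using norm_le_pi_norm x i
        gcongr
    _ ≤ ∏ i, gaussianIccIntegral v μ (x i) :=
        Finset.prod_le_prod (fun _ _ => by positivity)
          fun i _ => le_gaussianIccIntegral hμ hv hμv _

end GaussianIccIntegral

lemma gaussD_eq_prod (D : ℕ) (σ : ℝ) (w : Fin D → ℝ) :
    gaussD D σ w = ∏ i, gaussianPDFReal 0 (σ ^ 2).toNNReal (w i) := by
  simp only [gaussD, gaussianPDFReal, Real.coe_toNNReal _ (sq_nonneg σ), sub_zero,
    Finset.prod_mul_distrib, Finset.prod_const, Finset.card_univ, Fintype.card_fin, ← exp_sum,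
    ← Finset.sum_div, Finset.sum_neg_distrib]
  congr 1
  rw [sqrt_eq_rpow, ← rpow_neg (by positivity), ← rpow_mul_natCast (by positivity)]
  ring_nf

lemma setIntegral_cube_prod (D : ℕ) (f : Fin D → ℝ → ℝ) :
    ∫ y in cube D, ∏ i, f i (y i) = ∏ i, ∫ u in Icc (-1) 1, f i u := by
  rw [cube, ← Set.pi_univ_Icc, volume_pi, Measure.restrict_pi_pi]
  exact integral_fintype_prod_eq_prod _

lemma setIntegral_cube_gaussD (D : ℕ) (σ μ : ℝ) (x : Fin D → ℝ) :
    ∫ y in cube D, gaussD D σ (x - μ • y) =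
      ∏ i, gaussianIccIntegral (σ ^ 2).toNNReal μ (x i) := by
  simp only [gaussD_eq_prod, Pi.sub_apply, Pi.smul_apply, smul_eq_mul]
  exact setIntegral_cube_prod D fun i u => gaussianPDFReal 0 _ (x i - μ * u)

lemma setIntegral_cube_mul_gaussD_mem_Icc {D : ℕ} {p₀ : (Fin D → ℝ) → ℝ} (hp : Measurable p₀)
    {a b : ℝ} (hpab : ∀ y ∈ cube D, a ≤ p₀ y ∧ p₀ y ≤ b) (σ μ : ℝ) (x : Fin D → ℝ) :
    a * ∏ i, gaussianIccIntegral (σ ^ 2).toNNReal μ (x i) ≤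
        ∫ y in cube D, p₀ y * gaussD D σ (x - μ • y) ∧
      ∫ y in cube D, p₀ y * gaussD D σ (x - μ • y) ≤
        b * ∏ i, gaussianIccIntegral (σ ^ 2).toNNReal μ (x i) := by
  rw [← setIntegral_cube_gaussD]
  refine setIntegral_mul_mem_Icc measurableSet_Icc hp.aestronglyMeasurable
    (Continuous.integrableOn_Icc (by unfold gaussD; fun_prop)) (fun y _ => ?_) hpab
  rw [gaussD_eq_prod]
  exact Finset.prod_nonneg fun i _ => gaussianPDFReal_nonneg _ _ _

lemma muT_lt_one {τlo τhi : ℝ} (hτlo : 0 < τlo) {α : ℝ → ℝ} (hα : Measurable α)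
    (hαb : ∀ s, 0 ≤ s → τlo ≤ α s ∧ α s ≤ τhi) {t : ℝ} (ht : 0 < t) : muT α t < 1 := by
  have hint : IntegrableOn α (Ioc 0 t) :=
    Measure.integrableOn_of_bounded (by simp [Real.volume_Ioc]) hα.aestronglyMeasurable
      (ae_restrict_of_forall_mem measurableSet_Ioc fun s hs =>
        abs_le_max_abs_abs (hαb s hs.1.le).1 (hαb s hs.1.le).2)
  rw [muT, exp_lt_one_iff, neg_lt_zero]
  calc 0 < t * τlo := by positivity
    _ = ∫ _ in Ioc 0 t, τlo := by simp [ht.le]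
    _ ≤ ∫ s in Ioc 0 t, α s :=
        setIntegral_mono_on (integrableOn_const (by simp [Real.volume_Ioc])) hint
          measurableSet_Ioc fun s hs => (hαb s hs.1.le).1

theorem statement_16_general
    (D : ℕ) (K τ₁ τlo τhi : ℝ)
    (hK : 0 < K) (hτ₁ : 0 < τ₁) (hτlo : 0 < τlo) :
    ∃ C : ℝ, 0 < C ∧
      ∀ (p₀ : (Fin D → ℝ) → ℝ) (α : ℝ → ℝ),
        ForwardHyp D τlo τhi α p₀ →
        (∀ x ∈ cube D, τ₁ ≤ p₀ x ∧ p₀ x ≤ K) →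
        ∀ (x : Fin D → ℝ) (t : ℝ), 0 < t →
          C⁻¹ * Real.exp (-((D : ℝ) * max (‖x‖ - muT α t) 0 ^ 2) / sigmaT α t ^ 2) ≤
              fwdDen D α p₀ t x ∧
            fwdDen D α p₀ t x ≤
              C * Real.exp (-(max (‖x‖ - muT α t) 0 ^ 2) / (2 * sigmaT α t ^ 2)) := by
  set c := √(2 * π) * exp 1
  refine ⟨max (K * 2 ^ D) (c ^ D / τ₁), lt_max_of_lt_right (by positivity), ?_⟩
  rintro p₀ α ⟨hp, -, -, -, hα, hαb⟩ hpb x t ht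
  set μ := muT α t
  set v := (sigmaT α t ^ 2).toNNReal
  have hμ : 0 < μ := exp_pos _
  have hμ1 : μ < 1 := muT_lt_one hτlo hα hαb ht
  have hσv : sigmaT α t ^ 2 = v := (Real.coe_toNNReal _ (sq_nonneg _)).symm
  have hμv : μ ^ 2 + v = 1 := by
    rw [← hσv, sigmaT, sq_sqrt (by nlinarith)]
    ring
  have hv : v ≠ 0 := fun h => by
    rw [h, NNReal.coe_zero, add_zero] at hμv
    nlinarith
  obtain ⟨hlow, hup⟩ := setIntegral_cube_mul_gaussD_mem_Icc hp hpb (sigmaT α t) μ x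
  rw [hσv]
  constructor
  · calc _ ≤ τ₁ * (c⁻¹ ^ D * exp (-(D * max (‖x‖ - μ) 0 ^ 2) / v)) := by
          rw [← mul_assoc]
          gcongr
          calc (max (K * 2 ^ D) (c ^ D / τ₁))⁻¹ ≤ (c ^ D / τ₁)⁻¹ :=
                inv_anti₀ (by positivity) (le_max_right _ _)
            _ = τ₁ * c⁻¹ ^ D := by rw [inv_div, inv_pow, div_eq_mul_inv]
      _ ≤ τ₁ * ∏ i, gaussianIccIntegral v μ (x i) := by
          gcongr
          simpa only [Fintype.card_fin] using le_prod_gaussianIccIntegral hμ hv hμv x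
      _ ≤ fwdDen D α p₀ t x := hlow
  · calc fwdDen D α p₀ t x ≤ K * ∏ i, gaussianIccIntegral v μ (x i) := hup
      _ ≤ K * (2 ^ D * exp (-max (‖x‖ - μ) 0 ^ 2 / (2 * v))) := by
          gcongr
          simpa only [Fintype.card_fin] using prod_gaussianIccIntegral_le hμ hv hμv x
      _ ≤ _ := by
          rw [← mul_assoc]
          gcongr
          exact le_max_left _ _

/-- Lemma A.1 of the paper: Gaussian-type upper and lower bounds
for the marginal density `p_t`. -/
theorem statement_16
    (D : ℕ) (hD : 0 < D) (K τ₁ τlo τhi : ℝ)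
    (hK : 0 < K) (hτ₁ : 0 < τ₁) (hτlo : 0 < τlo) (hττ : τlo ≤ τhi) :
    ∃ C : ℝ, 0 < C ∧
      ∀ (p₀ : (Fin D → ℝ) → ℝ) (α : ℝ → ℝ),
        ForwardHyp D τlo τhi α p₀ →
        (∀ x ∈ cube D, τ₁ ≤ p₀ x ∧ p₀ x ≤ K) →
        ∀ (x : Fin D → ℝ) (t : ℝ), 0 < t →
          C⁻¹ * Real.exp (-((D : ℝ) * max (‖x‖ - muT α t) 0 ^ 2) / sigmaT α t ^ 2) ≤
              fwdDen D α p₀ t x ∧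
            fwdDen D α p₀ t x ≤
              C * Real.exp (-(max (‖x‖ - muT α t) 0 ^ 2) / (2 * sigmaT α t ^ 2)) :=
  statement_16_general D K τ₁ τlo τhi hK hτ₁ hτlo

end DMpaper

end
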